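/- arXiv:1403.4236 — 5 statements merged into one kernel-verified Lean document; each statement's English description precedes it below -/
import Mathlib

section
/- Let p be a prime and λ ∈ ℚ_p with |λ|_p = 1, and suppose |1 - λ|_p = p^(-2n) for some n ≥ 1 and that s ∈ ℚ_p satisfies s² = 1 - λ. Then z^± = (2 - λ ± 2s)/λ satisfy |z^± - 1|_p = |2|_p · p^(-n) < p^(-1/(p-1)); in particular |z^±|_p = 1. -/
lemma aux6 (p : ℕ) [Fact p.Prime] (l s : ℚ_[p]) (n : ℕ) (hn : 1 ≤ n)
    (hl : ‖l‖ = 1) (hsn : ‖s‖ = (p : ℝ) ^ (-(n : ℤ))) (hs : s ^ 2 = 1 - l) :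
    ‖(2 - l + 2 * s) / l - 1‖ = ‖(2 : ℚ_[p])‖ * (p : ℝ) ^ (-(n : ℤ)) ∧
    ‖(2 - l + 2 * s) / l - 1‖ < (p : ℝ) ^ (-(1 : ℝ) / ((p : ℝ) - 1)) ∧
    ‖(2 - l + 2 * s) / l‖ = 1 := by
  have hp : p.Prime := Fact.out
  have hp1 : 1 < (p : ℝ) := by exact_mod_cast hp.one_lt
  have hl0 : l ≠ 0 := by intro h; simp [h] at hl
  have hslt1 : ‖s‖ < 1 := by rw [hsn]; exact zpow_lt_one_of_neg₀ hp1 (by omega)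
  have hs1 : ‖s + 1‖ = 1 := by
    rw [Padic.add_eq_max_of_ne (by rw [norm_one]; exact hslt1.ne), norm_one]
    exact max_eq_right hslt1.le
  have eq1 : (2 - l + 2 * s) / l - 1 = 2 * s * (s + 1) / l := by
    field_simp
    linear_combination (-2 : ℚ_[p]) * hs
  have e2 : ‖(2 - l + 2 * s) / l - 1‖ = ‖(2 : ℚ_[p])‖ * (p : ℝ) ^ (-(n : ℤ)) := by
    rw [eq1, norm_div, norm_mul, norm_mul, hs1, hsn, hl]
    ring
  have h2le : ‖(2 : ℚ_[p])‖ ≤ 1 := by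
    have := Padic.norm_int_le_one (p := p) 2
    simpa using this
  have hznn : (0:ℝ) < (p : ℝ) ^ (-(n : ℤ)) := zpow_pos (by linarith) _
  have hlt1 : ‖(2 : ℚ_[p])‖ * (p : ℝ) ^ (-(n : ℤ)) < 1 := by
    calc ‖(2 : ℚ_[p])‖ * (p : ℝ) ^ (-(n : ℤ)) ≤ 1 * (p : ℝ) ^ (-(n : ℤ)) := by
          exact mul_le_mul_of_nonneg_right h2le hznn.le
      _ = (p : ℝ) ^ (-(n : ℤ)) := one_mul _
      _ < 1 := zpow_lt_one_of_neg₀ hp1 (by omega)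
  have key : ‖(2 : ℚ_[p])‖ * (p : ℝ) ^ (-(n : ℤ)) < (p : ℝ) ^ (-(1 : ℝ) / ((p : ℝ) - 1)) := by
    rcases eq_or_ne p 2 with hp2 | hp2
    · subst hp2
      have h2n : ‖(2 : ℚ_[2])‖ = (2 : ℝ)⁻¹ := by
        have := Padic.norm_p (p := 2)
        simpa using this
      have hr : ((2 : ℕ) : ℝ) ^ (-(1 : ℝ) / (((2:ℕ) : ℝ) - 1)) = (2 : ℝ)⁻¹ := by
        norm_num
      rw [h2n, hr]
      have : ((2:ℕ) : ℝ) ^ (-(n : ℤ)) < 1 := zpow_lt_one_of_neg₀ (by norm_num) (by omega)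
      calc (2 : ℝ)⁻¹ * ((2:ℕ) : ℝ) ^ (-(n : ℤ)) < (2 : ℝ)⁻¹ * 1 := by
            apply mul_lt_mul_of_pos_left this (by norm_num)
        _ = (2 : ℝ)⁻¹ := mul_one _
    · have h2n : ‖(2 : ℚ_[p])‖ = 1 := by
        have : ¬ (p : ℤ) ∣ 2 := by
          intro h
          have hd : p ∣ 2 := by exact_mod_cast h
          have := Nat.le_of_dvd (by norm_num) hd
          have := hp.two_le
          omega
        have h1 : ¬ ‖((2 : ℤ) : ℚ_[p])‖ < 1 := by
          rw [Padic.norm_intCast_lt_one_iff]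
          exact_mod_cast this
        have h2 : ‖((2 : ℤ) : ℚ_[p])‖ ≤ 1 := Padic.norm_int_le_one 2
        push_neg at h1
        have := le_antisymm h2 h1
        simpa using this
      rw [h2n, one_mul]
      have hp3 : 3 ≤ p := by
        rcases hp.two_le.lt_or_eq with h | h
        · omega
        · omega
      rw [show ((p : ℝ) ^ (-(n : ℤ)) = (p : ℝ) ^ ((-(n : ℤ) : ℤ) : ℝ)) from
        (Real.rpow_intCast _ _).symm]
      rw [Real.rpow_lt_rpow_left_iff hp1]
      have hpr : (2 : ℝ) ≤ (p : ℝ) - 1 := by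
        have : (3 : ℝ) ≤ (p : ℝ) := by exact_mod_cast hp3
        linarith
      have h1 : (1:ℝ)/((p : ℝ) - 1) ≤ 1/2 := by
        apply one_div_le_one_div_of_le (by norm_num) hpr
      have hn1 : (1 : ℝ) ≤ (n : ℝ) := by exact_mod_cast hn
      push_cast
      rw [neg_div]
      have : (1:ℝ)/2 < 1 := by norm_num
      linarith
  refine ⟨e2, by rw [e2]; exact key, ?_⟩
  have hz1 : ‖(2 - l + 2 * s) / l - 1‖ < 1 := by rw [e2]; exact hlt1
  have : (2 - l + 2 * s) / l = ((2 - l + 2 * s) / l - 1) + 1 := by ring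
  rw [this, Padic.add_eq_max_of_ne (by rw [norm_one]; exact hz1.ne), norm_one]
  exact max_eq_right hz1.le

theorem stmt6 (p : ℕ) [Fact p.Prime] (l s : ℚ_[p]) (n : ℕ) (hn : 1 ≤ n)
    (hl : ‖l‖ = 1) (h1l : ‖1 - l‖ = (p : ℝ) ^ (-(2 * (n : ℤ))))
    (hs : s ^ 2 = 1 - l) :
    (‖(2 - l + 2 * s) / l - 1‖ = ‖(2 : ℚ_[p])‖ * (p : ℝ) ^ (-(n : ℤ)) ∧
     ‖(2 - l + 2 * s) / l - 1‖ < (p : ℝ) ^ (-(1 : ℝ) / ((p : ℝ) - 1)) ∧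
     ‖(2 - l + 2 * s) / l‖ = 1) ∧
    (‖(2 - l - 2 * s) / l - 1‖ = ‖(2 : ℚ_[p])‖ * (p : ℝ) ^ (-(n : ℤ)) ∧
     ‖(2 - l - 2 * s) / l - 1‖ < (p : ℝ) ^ (-(1 : ℝ) / ((p : ℝ) - 1)) ∧
     ‖(2 - l - 2 * s) / l‖ = 1) := by
  have hp : p.Prime := Fact.out
  have hp1 : 1 < (p : ℝ) := by exact_mod_cast hp.one_lt
  have hsn : ‖s‖ = (p : ℝ) ^ (-(n : ℤ)) := by
    have hsq : ‖s‖ ^ 2 = ((p : ℝ) ^ (-(n : ℤ))) ^ 2 := by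
      rw [← norm_pow, hs, h1l, ← zpow_natCast ((p:ℝ) ^ (-(n : ℤ))) 2, ← zpow_mul]
      ring_nf
    have h1 := Real.sqrt_sq (norm_nonneg s)
    have h2 := Real.sqrt_sq (zpow_nonneg (by linarith : (0:ℝ) ≤ (p:ℝ)) (-(n : ℤ)))
    rw [← h1, ← h2, hsq]
  refine ⟨aux6 p l s n hn hl hsn hs, ?_⟩
  have hneg : 2 - l - 2 * s = 2 - l + 2 * (-s) := by ring
  have hsn' : ‖-s‖ = (p : ℝ) ^ (-(n : ℤ)) := by rw [norm_neg]; exact hsn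
  have hs' : (-s) ^ 2 = 1 - l := by rw [neg_pow]; simpa using hs
  rw [hneg]
  exact aux6 p l (-s) n hn hl hsn' hs'
end

section
/- Let p > 3 be prime, and suppose λ ∈ ℚ_p satisfies |16λ - 16 - 3a·p^(2n)|_p < p^(-2n) for some n ≥ 1 and some quadratic residue a mod p (1 ≤ a ≤ p-1, a ≡ b² mod p for some b ≢ 0). If s ∈ ℚ_p with s² = λ(λ+8) and |s - 3|_p < 1, then 2(λ - 4 + s) is a square in ℚ_p. -/
/-!
Put `t = λ - 1` and `u = s - 3`, so that `s² = λ(λ + 8)` becomes `u(u + 6) = t(t + 10)`.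
The hypothesis on `λ` says `16t ≈ 3m` with `m = b²p²ⁿ` and `|m| = p⁻²ⁿ < 1`; since `u + 6` is a
unit, `|u| ≤ |t| ≤ |m|`. Eliminating `u` to first order gives `6 · 2(t + u) ≡ 32t ≡ 6m` modulo
terms of size `|m|²`, so `2(λ - 4 + s) = m(1 + ε)` with `|ε| < 1`, and `1 + ε` is a square by
Hensel's lemma since `p` is odd, while `m = (bpⁿ)²`.
-/

section Ultrametric

variable {K : Type*} [NormedField K] [IsUltrametricDist K]

theorem norm_add_lt_of_lt {x y : K} {r : ℝ} (hx : ‖x‖ < r) (hy : ‖y‖ < r) : ‖x + y‖ < r :=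
  (IsUltrametricDist.norm_add_le_max x y).trans_lt (max_lt hx hy)

theorem norm_sub_lt_of_lt {x y : K} {r : ℝ} (hx : ‖x‖ < r) (hy : ‖y‖ < r) : ‖x - y‖ < r := by
  rw [sub_eq_add_neg]
  exact norm_add_lt_of_lt hx (by rwa [norm_neg])

theorem norm_le_of_norm_sub_lt {x y : K} {r : ℝ} (h : ‖x - y‖ < r) (hy : ‖y‖ ≤ r) : ‖x‖ ≤ r := by
  simpa using (IsUltrametricDist.norm_add_le_max (x - y) y).trans (max_le h.le hy)

theorem norm_sub_mul_lt_of_norm_sub_lt {y z c c' : K} (h : ‖y - c * z‖ < ‖z‖) (hc : ‖c - c'‖ < 1) :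
    ‖y - c' * z‖ < ‖z‖ := by
  rw [show y - c' * z = (y - c * z) + (c - c') * z by ring]
  refine norm_add_lt_of_lt h ?_
  rw [norm_mul]
  exact mul_lt_of_lt_one_left ((norm_nonneg _).trans_lt h) hc

variable {l s m : K}

theorem norm_sub_one_le_of_norm_sixteen_mul_sub_lt (h2 : ‖(2 : K)‖ = 1)
    (hl : ‖16 * (l - 1) - 3 * m‖ < ‖m‖) : ‖l - 1‖ ≤ ‖m‖ := by
  have h16 : ‖(16 : K)‖ = 1 := by
    rw [show (16 : K) = 2 ^ 4 by norm_num, norm_pow, h2, one_pow]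
  have h3m : ‖3 * m‖ ≤ ‖m‖ := by
    rw [norm_mul]
    exact mul_le_of_le_one_left (norm_nonneg _)
      (by exact_mod_cast IsUltrametricDist.norm_natCast_le_one K 3)
  have := norm_le_of_norm_sub_lt hl h3m
  rwa [norm_mul, h16, one_mul] at this

theorem norm_sub_three_le_of_sq_eq (h6 : ‖(6 : K)‖ = 1) (hs : s ^ 2 = l * (l + 8))
    (hs3 : ‖s - 3‖ < 1) (hl1 : ‖l - 1‖ ≤ 1) : ‖s - 3‖ ≤ ‖l - 1‖ := by
  have hunit : ‖s - 3 + 6‖ = 1 := by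
    rw [IsUltrametricDist.norm_add_eq_max_of_norm_ne_norm (by rw [h6]; exact hs3.ne), h6,
      max_eq_right hs3.le]
  have hbound : ‖l - 1 + 10‖ ≤ 1 :=
    (IsUltrametricDist.norm_add_le_max _ _).trans
      (max_le hl1 (by exact_mod_cast IsUltrametricDist.norm_natCast_le_one K 10))
  have hcurve : (s - 3) * (s - 3 + 6) = (l - 1) * (l - 1 + 10) := by linear_combination hs
  have := congrArg norm hcurve
  rw [norm_mul, norm_mul, hunit, mul_one] at this
  rw [this]
  exact mul_le_of_le_one_right (norm_nonneg _) hbound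

theorem norm_two_mul_sub_four_add_sub_lt (h2 : ‖(2 : K)‖ = 1) (h3 : ‖(3 : K)‖ = 1)
    (hm : ‖m‖ < 1) (hl : ‖16 * (l - 1) - 3 * m‖ < ‖m‖) (hs : s ^ 2 = l * (l + 8))
    (hs3 : ‖s - 3‖ < 1) : ‖2 * (l - 4 + s) - m‖ < ‖m‖ := by
  set x := 2 * (l - 4 + s)
  have h6 : ‖(6 : K)‖ = 1 := by rw [show (6 : K) = 2 * 3 by norm_num, norm_mul, h2, h3, one_mul]
  have ht : ‖l - 1‖ ≤ ‖m‖ := norm_sub_one_le_of_norm_sixteen_mul_sub_lt h2 hl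
  have hu : ‖s - 3‖ ≤ ‖m‖ := (norm_sub_three_le_of_sq_eq h6 hs hs3 (ht.trans hm.le)).trans ht
  have hx : ‖x‖ ≤ ‖m‖ := by
    rw [show x = 2 * ((l - 1) + (s - 3)) by ring, norm_mul, h2, one_mul]
    exact (IsUltrametricDist.norm_add_le_max _ _).trans (max_le ht hu)
  have hquad : ∀ v w : K, ‖v‖ ≤ ‖m‖ → ‖w‖ ≤ ‖m‖ → ‖v * w‖ < ‖m‖ := fun v w hv hw =>
    calc ‖v * w‖ ≤ ‖m‖ * ‖m‖ := by
          rw [norm_mul]; exact mul_le_mul hv hw (norm_nonneg _) (norm_nonneg _)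
      _ < ‖m‖ := mul_lt_of_lt_one_right ((norm_nonneg _).trans_lt hl) hm
  have hexpand : 6 * (x - m)
      = 2 * (16 * (l - 1) - 3 * m + (l - 1) * (s - 3) + (l - 1) * (l - 1)) - x * (s - 3) := by
    linear_combination 2 * hs
  have := congrArg norm hexpand
  rw [norm_mul, h6, one_mul] at this
  rw [this]
  refine norm_sub_lt_of_lt ?_ (hquad _ _ hx hu)
  rw [norm_mul, h2, one_mul]
  exact norm_add_lt_of_lt (norm_add_lt_of_lt hl (hquad _ _ ht hu)) (hquad _ _ ht ht)

end Ultrametric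

namespace Padic

variable {p : ℕ} [Fact p.Prime]

theorem norm_natCast_eq_one_of_lt {k : ℕ} (hk0 : k ≠ 0) (hkp : k < p) : ‖(k : ℚ_[p])‖ = 1 :=
  norm_natCast_eq_one_iff.mpr (Nat.coprime_of_lt_prime hk0 hkp Fact.out)

theorem norm_intCast_sub_lt_one_of_zmod_eq {a c : ℤ} (h : (a : ZMod p) = c) :
    ‖(a : ℚ_[p]) - c‖ < 1 := by
  rw [← Int.cast_sub, norm_intCast_lt_one_iff, ← ZMod.intCast_eq_intCast_iff_dvd_sub]
  exact h.symm

open Polynomial in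
theorem isSquare_of_norm_sub_one_lt (hp : p ≠ 2) {z : ℚ_[p]} (hz : ‖z - 1‖ < 1) : IsSquare z := by
  set Z : ℤ_[p] := ⟨z, norm_le_of_norm_sub_lt hz norm_one.le⟩
  have h2 : ‖(2 : ℤ_[p])‖ = 1 := by
    rw [PadicInt.norm_def]
    exact_mod_cast norm_natCast_eq_one_iff.mpr
      ((Nat.coprime_primes Fact.out Nat.prime_two).mpr hp)
  have hensel : ‖aeval (1 : ℤ_[p]) (X ^ 2 - C Z)‖
      < ‖aeval (1 : ℤ_[p]) (derivative (X ^ 2 - C Z))‖ ^ 2 := by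
    simp only [map_sub, map_pow, aeval_X, aeval_C, derivative_X_pow, derivative_C, map_mul,
      one_pow]
    norm_num [h2, PadicInt.norm_def]
    exact (norm_sub_rev _ _).trans_lt hz
  obtain ⟨r, hr, -⟩ := hensels_lemma hensel
  have hr : r ^ 2 = Z := by simpa [sub_eq_zero] using hr
  refine ⟨r, ?_⟩
  rw [← sq, ← PadicInt.coe_pow, hr]

theorem isSquare_of_norm_sub_sq_lt (hp : p ≠ 2) {x w : ℚ_[p]} (h : ‖x - w ^ 2‖ < ‖w ^ 2‖) :
    IsSquare x := by
  have hw : w ^ 2 ≠ 0 := by rintro hw; simp [hw] at h; exact (norm_nonneg x).not_gt h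
  obtain ⟨r, hr⟩ := isSquare_of_norm_sub_one_lt hp (z := x / w ^ 2) (by
    rwa [← div_self hw, ← sub_div, norm_div, div_lt_one (norm_pos_iff.mpr hw)])
  exact ⟨r * w, by rw [← mul_mul_mul_comm, ← hr, ← sq, div_mul_cancel₀ _ hw]⟩

end Padic

theorem stmt8_general (p : ℕ) [Fact p.Prime] (hp : 3 < p) (l s : ℚ_[p]) (n a : ℕ)
    (hn : 1 ≤ n)
    (haQR : ∃ b : ℕ, ¬ (p ∣ b) ∧ (a : ZMod p) = (b : ZMod p) ^ 2)
    (hl : ‖16 * l - 16 - 3 * (a : ℚ_[p]) * (p : ℚ_[p]) ^ (2 * n)‖ < (p : ℝ) ^ (-(2 * (n : ℤ))))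
    (hs : s ^ 2 = l * (l + 8)) (hs3 : ‖s - 3‖ < 1) :
    ∃ q : ℚ_[p], q ^ 2 = 2 * (l - 4 + s) := by
  obtain ⟨b, hb, hab⟩ := haQR
  have h2 : ‖(2 : ℚ_[p])‖ = 1 := by
    exact_mod_cast Padic.norm_natCast_eq_one_of_lt two_ne_zero (by omega)
  have h3 : ‖(3 : ℚ_[p])‖ = 1 := by
    exact_mod_cast Padic.norm_natCast_eq_one_of_lt three_ne_zero hp
  have hb1 : ‖(b : ℚ_[p])‖ = 1 :=
    Padic.norm_natCast_eq_one_iff.mpr ((Nat.Prime.coprime_iff_not_dvd Fact.out).mpr hb)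
  have hP : ‖(p : ℚ_[p]) ^ (2 * n)‖ = (p : ℝ) ^ (-(2 * (n : ℤ))) := by
    rw [Padic.norm_p_pow, Nat.cast_mul, Nat.cast_two]
  set w : ℚ_[p] := b * p ^ n
  have hw : w ^ 2 = b ^ 2 * p ^ (2 * n) := by ring
  have hwP : ‖w ^ 2‖ = ‖(p : ℚ_[p]) ^ (2 * n)‖ := by
    rw [hw, norm_mul, norm_pow, hb1, one_pow, one_mul]
  have hw1 : ‖w ^ 2‖ < 1 := by
    rw [hwP, norm_pow]
    exact pow_lt_one₀ (norm_nonneg _) Padic.norm_p_lt_one (by omega)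
  have hab' : ‖3 * (a : ℚ_[p]) - 3 * b ^ 2‖ < 1 := by
    have := Padic.norm_intCast_sub_lt_one_of_zmod_eq (p := p) (a := a) (c := b ^ 2)
      (by push_cast; exact hab)
    push_cast at this
    rwa [← mul_sub, norm_mul, h3, one_mul]
  have hl' : ‖16 * (l - 1) - 3 * w ^ 2‖ < ‖w ^ 2‖ := by
    have hsplit : 16 * (l - 1) - 3 * (a : ℚ_[p]) * p ^ (2 * n)
        = 16 * l - 16 - 3 * a * p ^ (2 * n) := by ring
    rw [hwP, hw, ← mul_assoc]
    exact norm_sub_mul_lt_of_norm_sub_lt (by rwa [hsplit, hP]) hab'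
  obtain ⟨q, hq⟩ := Padic.isSquare_of_norm_sub_sq_lt (by omega)
    (norm_two_mul_sub_four_add_sub_lt h2 h3 hw1 hl' hs hs3)
  exact ⟨q, by rw [hq, sq]⟩

theorem stmt8 (p : ℕ) [Fact p.Prime] (hp : 3 < p) (l s : ℚ_[p]) (n a : ℕ)
    (hn : 1 ≤ n) (ha1 : 1 ≤ a) (ha2 : a ≤ p - 1)
    (haQR : ∃ b : ℕ, ¬ (p ∣ b) ∧ (a : ZMod p) = (b : ZMod p) ^ 2)
    (hl : ‖16 * l - 16 - 3 * (a : ℚ_[p]) * (p : ℚ_[p]) ^ (2 * n)‖ < (p : ℝ) ^ (-(2 * (n : ℤ))))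
    (hs : s ^ 2 = l * (l + 8)) (hs3 : ‖s - 3‖ < 1) :
    ∃ q : ℚ_[p], q ^ 2 = 2 * (l - 4 + s) :=
  stmt8_general p hp l s n a hn haQR hl hs hs3
end

section
/- Define F : (ℚ_p^×)² → ℚ_p² on pairs z = (z₁, z₂) with z₁ + z₂ ≠ 0 by F(z) = ((1+z₁)/(z₁+z₂), (1+z₂)/(z₁+z₂)). Then F is injective: if F(z) = F(t) with z₁ + z₂ ≠ 0 and t₁ + t₂ ≠ 0, then z = t. -/
theorem stmt11 (p : ℕ) [Fact p.Prime] (z₁ z₂ t₁ t₂ : ℚ_[p])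
    (hz : z₁ + z₂ ≠ 0) (ht : t₁ + t₂ ≠ 0)
    (h1 : (1 + z₁) / (z₁ + z₂) = (1 + t₁) / (t₁ + t₂))
    (h2 : (1 + z₂) / (z₁ + z₂) = (1 + t₂) / (t₁ + t₂)) :
    z₁ = t₁ ∧ z₂ = t₂ := by
  rw [div_eq_div_iff hz ht] at h1 h2
  have h2ne : (2 : ℚ_[p]) ≠ 0 := two_ne_zero
  have hs : z₁ + z₂ = t₁ + t₂ := by
    have key : 2 * (z₁ + z₂) = 2 * (t₁ + t₂) := by linear_combination -h1 - h2
    exact mul_left_cancel₀ h2ne key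
  constructor
  · have e : (1 + z₁) * (t₁ + t₂) = (1 + t₁) * (t₁ + t₂) := by linear_combination h1 + (1 + t₁) * hs
    have := mul_right_cancel₀ ht e
    linear_combination this
  · have e : (1 + z₂) * (t₁ + t₂) = (1 + t₂) * (t₁ + t₂) := by linear_combination h2 + (1 + t₂) * hs
    have := mul_right_cancel₀ ht e
    linear_combination this
end

section
/- Let p > 3 be prime and suppose λ ∈ ℚ_p satisfies |16λ - 16 - 3a·p^(2n)|_p < p^(-2n) for some n ≥ 1 and quadratic residue a mod p. Let s, r ∈ ℚ_p satisfy s² = λ, |s - 1|_p < 1 (square root of λ), r² = λ + 8, |r - 3|_p < 1, and let q ∈ ℚ_p satisfy q² = 2(λ - 4 + s·r) with |q|_p = p^(-n). Then z^± = (s + r)(2s ± q)/8 satisfy |z^± - 1|_p < 1; in particular z^± ∈ ℰ_p. -/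
theorem stmt12 (p : ℕ) [Fact p.Prime] (hp : 3 < p) (l s r q : ℚ_[p]) (n a : ℕ)
    (hn : 1 ≤ n) (ha1 : 1 ≤ a) (ha2 : a ≤ p - 1)
    (haQR : ∃ b : ℕ, ¬ (p ∣ b) ∧ (a : ZMod p) = (b : ZMod p) ^ 2)
    (hl : ‖16 * l - 16 - 3 * (a : ℚ_[p]) * (p : ℚ_[p]) ^ (2 * n)‖ < (p : ℝ) ^ (-(2 * (n : ℤ))))
    (hs : s ^ 2 = l) (hs1 : ‖s - 1‖ < 1)
    (hr : r ^ 2 = l + 8) (hr3 : ‖r - 3‖ < 1)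
    (hq : q ^ 2 = 2 * (l - 4 + s * r)) (hqn : ‖q‖ = (p : ℝ) ^ (-(n : ℤ))) :
    ‖(s + r) * (2 * s + q) / 8 - 1‖ < 1 ∧ ‖(s + r) * (2 * s - q) / 8 - 1‖ < 1 := by
  have hp2 : (2 : ℝ) ≤ p := by exact_mod_cast hp.le.trans' (by norm_num)
  have hp1 : (1 : ℝ) < p := by linarith
  have h8 : ‖(8 : ℚ_[p])‖ = 1 := by
    have hnd : ¬ p ∣ 8 := by
      intro h
      have hpp : p.Prime := Fact.out
      have h8' := Nat.le_of_dvd (by norm_num) h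
      interval_cases p <;> revert hpp h <;> decide
    have hnd' : ¬ ((p : ℤ) ∣ (8 : ℤ)) := by exact_mod_cast hnd
    have h1 : ¬ (‖((8 : ℤ) : ℚ_[p])‖ < 1) := by
      rw [Padic.norm_intCast_lt_one_iff]; exact hnd'
    have h2 : ‖((8 : ℤ) : ℚ_[p])‖ ≤ 1 := Padic.norm_int_le_one 8
    push_cast at h1 h2
    exact le_antisymm h2 (not_lt.mp h1)
  have h8ne : (8 : ℚ_[p]) ≠ 0 := by
    intro h; rw [h, norm_zero] at h8; norm_num at h8
  have hq1 : ‖q‖ < 1 := by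
    rw [hqn]
    apply zpow_lt_one_of_neg₀ hp1
    omega
  have hsle : ‖s‖ ≤ 1 := by
    have := Padic.nonarchimedean (s - 1) 1
    simp only [sub_add_cancel, norm_one] at this
    exact this.trans (max_le hs1.le le_rfl)
  have hrle : ‖r‖ ≤ 1 := by
    have h3 : ‖(3 : ℚ_[p])‖ ≤ 1 := by
      have := Padic.norm_int_le_one (p := p) 3
      push_cast at this; exact this
    have := Padic.nonarchimedean (r - 3) 3
    simp only [sub_add_cancel] at this
    exact this.trans (max_le hr3.le h3)
  have hsum : ∀ t : ℚ_[p], ‖t‖ ≤ 1 → ‖q + t‖ ≤ 1 := by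
    intro t ht
    exact (Padic.nonarchimedean q t).trans (max_le hq1.le ht)
  have hsr : ‖s + r‖ ≤ 1 :=
    (Padic.nonarchimedean s r).trans (max_le hsle hrle)
  constructor
  · have key : (s + r) * (2 * s + q) / 8 - 1 = q * (q + (s + r)) / 8 := by
      field_simp
      linear_combination 2 * hs - hq
    rw [key, norm_div, h8, div_one, norm_mul]
    calc ‖q‖ * ‖q + (s + r)‖ ≤ ‖q‖ * 1 := by
          exact mul_le_mul_of_nonneg_left (hsum _ hsr) (norm_nonneg q)
      _ = ‖q‖ := mul_one _
      _ < 1 := hq1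
  · have key : (s + r) * (2 * s - q) / 8 - 1 = q * (q + (-(s + r))) / 8 := by
      field_simp
      linear_combination 2 * hs - hq
    rw [key, norm_div, h8, div_one, norm_mul]
    calc ‖q‖ * ‖q + (-(s + r))‖ ≤ ‖q‖ * 1 := by
          refine mul_le_mul_of_nonneg_left (hsum _ ?_) (norm_nonneg q)
          rw [norm_neg]; exact hsr
      _ = ‖q‖ := mul_one _
      _ < 1 := hq1
end

section
/- Let λ ∈ ℚ_p with λ ≠ 0 and define f(z) = λ(1+z)²/(4z²) for z ≠ 0. Then for z ≠ 0 with f(z) ≠ z and f(z) ≠ 0, the identity (f(f(z)) - z)/(f(z) - z) = (λz² - 2(2-λ)z + λ)·g(z) holds for some rational function g(z) nonvanishing at the relevant points; in particular, every 2-periodic point of f that is not a fixed point is a root of λz² - 2(2-λ)z + λ = 0. -/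
theorem stmt15 (p : ℕ) [Fact p.Prime] (l : ℚ_[p]) (hl : l ≠ 0)
    (f : ℚ_[p] → ℚ_[p]) (hf : ∀ z, f z = l * (1 + z) ^ 2 / (4 * z ^ 2)) :
    ∃ g : ℚ_[p] → ℚ_[p],
      (∀ z : ℚ_[p], z ≠ 0 → f z ≠ 0 → f z ≠ z →
        (f (f z) - z) / (f z - z) = (l * z ^ 2 - 2 * (2 - l) * z + l) * g z ∧ g z ≠ 0) ∧
      (∀ z : ℚ_[p], z ≠ 0 → f z ≠ 0 → f z ≠ z → f (f z) = z →
        l * z ^ 2 - 2 * (2 - l) * z + l = 0) := by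
  have h4 : (4 : ℚ_[p]) ≠ 0 := by norm_num
  have key : ∀ z : ℚ_[p], z ≠ 0 → f z ≠ 0 → f z ≠ z →
      (f (f z) - z) / (f z - z) =
        (l * z ^ 2 - 2 * (2 - l) * z + l) * (z ^ 2 / (l * (1 + z) ^ 4)) ∧
      z ^ 2 / (l * (1 + z) ^ 4) ≠ 0 := by
    intro z hz hf0 hfz
    have h1 : (1 : ℚ_[p]) + z ≠ 0 := by
      intro h
      apply hf0
      rw [hf z, h]
      simp
    have hsub : f z - z ≠ 0 := sub_ne_zero.mpr hfz
    have hg : z ^ 2 / (l * (1 + z) ^ 4) ≠ 0 :=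
      div_ne_zero (pow_ne_zero _ hz) (mul_ne_zero hl (pow_ne_zero _ h1))
    refine ⟨?_, hg⟩
    rw [div_eq_iff hsub, hf (f z)]
    rw [hf z] at hf0 ⊢
    field_simp
    ring
  refine ⟨fun z => z ^ 2 / (l * (1 + z) ^ 4), key, ?_⟩
  intro z hz hf0 hfz hper
  obtain ⟨heq, hg⟩ := key z hz hf0 hfz
  rw [hper, sub_self, zero_div] at heq
  rcases mul_eq_zero.mp heq.symm with h | h
  · exact h
  · exact absurd h hg
end
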